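/- In the fixed-stress error framework (bilinear-form version), assume additionally that there is β_{sd} > 0 such that for every s ∈ Q there exists w ∈ U with D w = s and a(w, w) ≤ β_{sd}⁻² ‖s‖², and that L ≥ 1/(λ + c_{K_d}²). Set ρ_d² := 1/(L⁻¹/(β_{sd}⁻² + λ) + 1). Then for every m ≥ 0: a(e_u^m, e_u^m) + λ ‖D e_u^m‖² ≤ (λ + c_{K_d}²)⁻¹ ρ_d^{2m} ‖Σᵢ e_{p,i}^0‖². -/

import Mathlib

/-!
Write `s_m = ∑ᵢ e_{p,i}^m` for the total pressure error and `E_m = a(e_u^m, e_u^m) + λ‖D e_u^m‖²`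
for the displacement energy; testing the displacement equation with `e_u^m` gives
`E_m = ⟪s_m, D e_u^m⟫`. Korn's inequality and Cauchy–Schwarz bound `(λ + c_{K_d}²) E_m ≤ ‖s_m‖²`,
and, combined with `L ≥ 1/(λ + c_{K_d}²)`, also `‖D e_u^m‖² ≤ L E_m`. Testing instead with a
preimage `w` of `s_m` under `D` and applying Cauchy–Schwarz to the energy form
`a + λ⟪D·, D·⟫` gives the inf-sup bound `‖s_m‖² ≤ K E_m` with `K = β_{sd}⁻² + λ`.

In the flow equations tested with the new iterates, the Darcy and storage terms are nonnegative,
so `L‖s_{m+1}‖ ≤ ‖L s_m - D e_u^m‖`. Expanding the square and inserting both bounds yields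
`‖s_{m+1}‖² ≤ (1 - 1/(L K)) ‖s_m‖² ≤ ρ_d² ‖s_m‖²`, and the energy bound turns this geometric decay
of `‖s_m‖²` into the claim.
-/

open scoped RealInnerProductSpace Matrix

theorem Matrix.PosSemidef.sum_mul_inner_nonneg {ι E : Type*} [Fintype ι]
    [NormedAddCommGroup E] [InnerProductSpace ℝ E] {M : Matrix ι ι ℝ} (hM : M.PosSemidef)
    (q : ι → E) : 0 ≤ ∑ i, ∑ j, M i j * ⟪q j, q i⟫ := by
  classical
  obtain ⟨B, rfl⟩ : ∃ B : Matrix ι ι ℝ, M = Bᴴ * B := by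
    open scoped MatrixOrder Matrix.Norms.L2Operator in
    exact CStarAlgebra.nonneg_iff_eq_star_mul_self.mp hM.nonneg
  have gram : ∑ i, ∑ j, (Bᴴ * B) i j * ⟪q j, q i⟫
      = ∑ k, ⟪∑ j, B k j • q j, ∑ j, B k j • q j⟫ := by
    simp only [Matrix.mul_apply, Matrix.conjTranspose_apply, star_trivial, sum_inner, inner_sum,
      real_inner_smul_left, real_inner_smul_right, Finset.sum_mul]
    calc _ = ∑ i, ∑ k, ∑ j, B k i * B k j * ⟪q j, q i⟫ :=
          Finset.sum_congr rfl fun _ _ => Finset.sum_comm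
      _ = _ := by rw [Finset.sum_comm]; simp only [mul_assoc]
  rw [gram]
  exact Finset.sum_nonneg fun k _ => real_inner_self_nonneg

theorem mul_norm_le_norm_of_mul_norm_sq_le_inner {E : Type*} [NormedAddCommGroup E]
    [InnerProductSpace ℝ E] {L : ℝ} {x y : E} (h : L * ‖y‖ ^ 2 ≤ ⟪x, y⟫) : L * ‖y‖ ≤ ‖x‖ := by
  rcases (norm_nonneg y).eq_or_lt with hy | hy
  · rw [← hy, mul_zero]
    exact norm_nonneg x
  · refine le_of_mul_le_mul_right ?_ hy
    calc L * ‖y‖ * ‖y‖ = L * ‖y‖ ^ 2 := by ring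
      _ ≤ ‖x‖ * ‖y‖ := h.trans (real_inner_le_norm x y)

theorem one_sub_le_one_div_add_one {t : ℝ} (ht : 0 ≤ t) : 1 - t ≤ 1 / (t + 1) := by
  rw [le_div_iff₀ (by positivity)]
  nlinarith

section Displacement

variable {U Q : Type*} [NormedAddCommGroup U] [InnerProductSpace ℝ U]
  [NormedAddCommGroup Q] [InnerProductSpace ℝ Q]
  {a : LinearMap.BilinForm ℝ U} {D : U →L[ℝ] Q} {lam : ℝ} {u : U} {s : Q}

theorem inner_eq_energy_of_forall (hu : ∀ w, a u w + lam * ⟪D u, D w⟫ = ⟪s, D w⟫) :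
    ⟪s, D u⟫ = a u u + lam * ‖D u‖ ^ 2 := by
  rw [← hu u, real_inner_self_eq_norm_sq]

theorem mul_energy_le_norm_sq_of_coercive (hu : ∀ w, a u w + lam * ⟪D u, D w⟫ = ⟪s, D w⟫)
    {c : ℝ} (hc : 0 ≤ lam + c) (hcoer : ∀ w, c * ‖D w‖ ^ 2 ≤ a w w) :
    (lam + c) * (a u u + lam * ‖D u‖ ^ 2) ≤ ‖s‖ ^ 2 := by
  have hDu : (lam + c) * ‖D u‖ ^ 2 ≤ a u u + lam * ‖D u‖ ^ 2 := by linarith [hcoer u]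
  have hE : a u u + lam * ‖D u‖ ^ 2 ≤ ‖s‖ * ‖D u‖ :=
    (inner_eq_energy_of_forall hu).symm.trans_le (real_inner_le_norm s (D u))
  nlinarith [sq_nonneg (‖s‖ - (lam + c) * ‖D u‖), mul_le_mul_of_nonneg_left hE hc,
    mul_le_mul_of_nonneg_left (hDu.trans hE) hc]

theorem norm_sq_le_mul_inner_of_coercive (hu : ∀ w, a u w + lam * ⟪D u, D w⟫ = ⟪s, D w⟫)
    {c L : ℝ} (hc : 0 < lam + c) (hcoer : ∀ w, c * ‖D w‖ ^ 2 ≤ a w w) (hL : 1 / (lam + c) ≤ L) :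
    ‖D u‖ ^ 2 ≤ L * ⟪s, D u⟫ := by
  rw [inner_eq_energy_of_forall hu]
  calc ‖D u‖ ^ 2 = 1 / (lam + c) * ((lam + c) * ‖D u‖ ^ 2) := by field_simp
    _ ≤ L * (a u u + lam * ‖D u‖ ^ 2) :=
      mul_le_mul hL (by linarith [hcoer u]) (by positivity) ((one_div_pos.2 hc).le.trans hL)

theorem norm_sq_le_mul_energy_of_infSup (ha : a.IsPosSemidef) (hlam : 0 ≤ lam)
    (hu : ∀ w, a u w + lam * ⟪D u, D w⟫ = ⟪s, D w⟫) {w : U} {C : ℝ} (hC0 : 0 ≤ C) (hw : D w = s)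
    (hC : a w w ≤ C * ‖s‖ ^ 2) :
    ‖s‖ ^ 2 ≤ (C + lam) * (a u u + lam * ‖D u‖ ^ 2) := by
  let b := a + lam • (innerₗ Q).compl₁₂ (D : U →ₗ[ℝ] Q) (D : U →ₗ[ℝ] Q)
  have hb : ∀ x y, b x y = a x y + lam * ⟪D x, D y⟫ := fun x y => by simp [b]
  have hbuw : b u w = ‖s‖ ^ 2 := by rw [hb, hu, hw, real_inner_self_eq_norm_sq]
  have hbww : b w w ≤ (C + lam) * ‖s‖ ^ 2 := by
    rw [hb, hw, real_inner_self_eq_norm_sq]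
    linarith
  have hbuu : b u u = a u u + lam * ‖D u‖ ^ 2 := by rw [hb, real_inner_self_eq_norm_sq]
  have hb_nonneg : ∀ x, 0 ≤ b x x := fun x => by
    rw [hb, real_inner_self_eq_norm_sq]
    have := ha.nonneg x
    positivity
  have hb_symm : LinearMap.IsSymm b := ⟨fun x y => by simp [hb, ha.eq x y, real_inner_comm]⟩
  have hcs := b.apply_sq_le_of_symm hb_nonneg hb_symm u w
  rw [hbuw, hbuu] at hcs
  rcases (sq_nonneg ‖s‖).eq_or_lt with hs | hs
  · rw [← hs]
    exact mul_nonneg (add_nonneg hC0 hlam) (hbuu ▸ hb_nonneg u)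
  · refine le_of_mul_le_mul_right ?_ hs
    calc ‖s‖ ^ 2 * ‖s‖ ^ 2 = (‖s‖ ^ 2) ^ 2 := by ring
      _ ≤ (a u u + lam * ‖D u‖ ^ 2) * ((C + lam) * ‖s‖ ^ 2) :=
        hcs.trans (mul_le_mul_of_nonneg_left hbww (hbuu ▸ hb_nonneg u))
      _ = (C + lam) * (a u u + lam * ‖D u‖ ^ 2) * ‖s‖ ^ 2 := by ring

end Displacement

section Pressure

variable {Q : Type*} [NormedAddCommGroup Q] [InnerProductSpace ℝ Q]

theorem mul_norm_sq_sum_le_inner_of_fixedStress {ι : Type*} [Fintype ι] {V : ι → Type*}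
    [∀ i, NormedAddCommGroup (V i)] [∀ i, InnerProductSpace ℝ (V i)]
    {Dv : ∀ i, V i →L[ℝ] Q} {M : Matrix ι ι ℝ} (hM : M.PosSemidef) {Rinv : ι → ℝ}
    (hRinv : ∀ i, 0 ≤ Rinv i) {L : ℝ} {d : Q} {v : ∀ i, V i} {p p' : ι → Q}
    (hflow : ∀ q : ι → Q, -(∑ i, ⟪Dv i (v i), q i⟫) - ∑ i, ∑ j, M i j * ⟪p' j, q i⟫
      - L * ⟪∑ j, p' j, ∑ i, q i⟫ = -(L * ⟪∑ j, p j, ∑ i, q i⟫) + ⟪d, ∑ i, q i⟫)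
    (hdarcy : ∀ z : ∀ i, V i, ∑ i, Rinv i * ⟪v i, z i⟫ - ∑ i, ⟪p' i, Dv i (z i)⟫ = 0) :
    L * ‖∑ i, p' i‖ ^ 2 ≤ ⟪L • ∑ i, p i - d, ∑ i, p' i⟫ := by
  have hv : 0 ≤ ∑ i, ⟪Dv i (v i), p' i⟫ := by
    have h := hdarcy v
    simp only [real_inner_comm (Dv _ _), sub_eq_zero] at h
    rw [← h]
    exact Finset.sum_nonneg fun i _ => mul_nonneg (hRinv i) real_inner_self_nonneg
  have hM' := hM.sum_mul_inner_nonneg p'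
  have h := hflow p'
  rw [real_inner_self_eq_norm_sq] at h
  rw [inner_sub_left, real_inner_smul_left]
  linarith

theorem norm_smul_sub_sq_le {L K : ℝ} (hL : 0 ≤ L) (hK : 0 < K) {s d : Q}
    (hd : ‖d‖ ^ 2 ≤ L * ⟪s, d⟫) (hs : ‖s‖ ^ 2 ≤ K * ⟪s, d⟫) :
    ‖L • s - d‖ ^ 2 ≤ (L ^ 2 - L / K) * ‖s‖ ^ 2 := by
  have hs' : L / K * ‖s‖ ^ 2 ≤ L * ⟪s, d⟫ := by
    calc L / K * ‖s‖ ^ 2 ≤ L / K * (K * ⟪s, d⟫) := by gcongr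
      _ = L * ⟪s, d⟫ := by field_simp
  rw [norm_sub_sq_real, norm_smul, real_inner_smul_left, mul_pow, Real.norm_eq_abs, sq_abs]
  linarith

theorem norm_sq_le_one_sub_mul_norm_sq {L K : ℝ} (hL : 0 < L) (hK : 0 < K) {s d s' : Q}
    (hd : ‖d‖ ^ 2 ≤ L * ⟪s, d⟫) (hs : ‖s‖ ^ 2 ≤ K * ⟪s, d⟫)
    (hs' : L * ‖s'‖ ^ 2 ≤ ⟪L • s - d, s'⟫) :
    ‖s'‖ ^ 2 ≤ (1 - L⁻¹ / K) * ‖s‖ ^ 2 := by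
  have hnorm := mul_norm_le_norm_of_mul_norm_sq_le_inner hs'
  refine le_of_mul_le_mul_left ?_ (pow_pos hL 2)
  calc L ^ 2 * ‖s'‖ ^ 2 = (L * ‖s'‖) ^ 2 := by ring
    _ ≤ ‖L • s - d‖ ^ 2 := by gcongr
    _ ≤ (L ^ 2 - L / K) * ‖s‖ ^ 2 := norm_smul_sub_sq_le hL.le hK hd hs
    _ = L ^ 2 * ((1 - L⁻¹ / K) * ‖s‖ ^ 2) := by field_simp

end Pressure

theorem fixed_stress_displacement_decay_discrete_general
    {U Q : Type*}
    [NormedAddCommGroup U] [InnerProductSpace ℝ U]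
    [NormedAddCommGroup Q] [InnerProductSpace ℝ Q]
    (n : ℕ)
    (V : Fin n → Type*)
    [∀ i, NormedAddCommGroup (V i)] [∀ i, InnerProductSpace ℝ (V i)]
    (a : U →ₗ[ℝ] U →ₗ[ℝ] ℝ)
    (hasymm : ∀ u w : U, a u w = a w u) (hapsd : ∀ u : U, 0 ≤ a u u)
    (D : U →L[ℝ] Q) (Dv : ∀ i, V i →L[ℝ] Q)
    (lam L cKd : ℝ) (Rinv : Fin n → ℝ)
    (hlam : 0 < lam) (hL : 0 < L) (hRinv : ∀ i, 0 < Rinv i)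
    (M : Matrix (Fin n) (Fin n) ℝ) (hM : M.PosSemidef)
    (hKorn : ∀ w : U, cKd ^ 2 * ‖D w‖ ^ 2 ≤ a w w)
    (eu : ℕ → U) (ev : ℕ → ∀ i, V i) (ep : ℕ → Fin n → Q)
    (heq1 : ∀ (m : ℕ) (q : Fin n → Q),
      -(∑ i, ⟪Dv i (ev (m + 1) i), q i⟫)
          - ∑ i, ∑ j, M i j * ⟪ep (m + 1) j, q i⟫
          - L * ⟪∑ j, ep (m + 1) j, ∑ i, q i⟫
        = -(L * ⟪∑ j, ep m j, ∑ i, q i⟫) + ⟪D (eu m), ∑ i, q i⟫)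
    (heq2 : ∀ (m : ℕ) (z : ∀ i, V i),
      ∑ i, Rinv i * ⟪ev (m + 1) i, z i⟫ - ∑ i, ⟪ep (m + 1) i, Dv i (z i)⟫ = 0)
    (heq3 : ∀ (m : ℕ) (w : U),
      a (eu m) w + lam * ⟪D (eu m), D w⟫ = ⟪∑ i, ep m i, D w⟫)
    (hLge : 1 / (lam + cKd ^ 2) ≤ L)
    (βsd : ℝ)
    (hinfsup : ∀ s : Q, ∃ w : U, D w = s ∧ a w w ≤ (βsd ^ 2)⁻¹ * ‖s‖ ^ 2)
    (ρd2 : ℝ) (hρd2 : ρd2 = 1 / (L⁻¹ / ((βsd ^ 2)⁻¹ + lam) + 1)) :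
    ∀ m : ℕ,
      a (eu m) (eu m) + lam * ‖D (eu m)‖ ^ 2
        ≤ (lam + cKd ^ 2)⁻¹ * ρd2 ^ m * ‖∑ i, ep 0 i‖ ^ 2 := by
  have ha : LinearMap.BilinForm.IsPosSemidef a := ⟨⟨hasymm⟩, ⟨hapsd⟩⟩
  have hpos : 0 < lam + cKd ^ 2 := by positivity
  have hρ : 0 ≤ ρd2 := by rw [hρd2]; positivity
  have hinfsup_energy : ∀ m,
      ‖∑ i, ep m i‖ ^ 2 ≤ ((βsd ^ 2)⁻¹ + lam) * ⟪∑ i, ep m i, D (eu m)⟫ := fun m => by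
    obtain ⟨w, hw, hwa⟩ := hinfsup (∑ i, ep m i)
    rw [inner_eq_energy_of_forall (heq3 m)]
    exact norm_sq_le_mul_energy_of_infSup ha hlam.le (heq3 m) (by positivity) hw hwa
  have hcontraction : ∀ m, ‖∑ i, ep (m + 1) i‖ ^ 2 ≤ ρd2 * ‖∑ i, ep m i‖ ^ 2 := fun m => by
    refine (norm_sq_le_one_sub_mul_norm_sq hL (by positivity)
      (norm_sq_le_mul_inner_of_coercive (heq3 m) hpos hKorn hLge) (hinfsup_energy m)
      (mul_norm_sq_sum_le_inner_of_fixedStress hM (fun i => (hRinv i).le) (heq1 m) (heq2 m))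
      ).trans ?_
    rw [hρd2]
    gcongr
    exact one_sub_le_one_div_add_one (by positivity)
  intro m
  calc a (eu m) (eu m) + lam * ‖D (eu m)‖ ^ 2 ≤ (lam + cKd ^ 2)⁻¹ * ‖∑ i, ep m i‖ ^ 2 := by
        rw [le_inv_mul_iff₀ hpos]
        exact mul_energy_le_norm_sq_of_coercive (heq3 m) hpos.le hKorn
    _ ≤ (lam + cKd ^ 2)⁻¹ * ρd2 ^ m * ‖∑ i, ep 0 i‖ ^ 2 := by
        rw [mul_assoc]
        gcongr
        exact le_geom (u := fun k => ‖∑ i, ep k i‖ ^ 2) hρ m fun k _ => hcontraction k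

/-- Discrete displacement estimate (error_eu:dis) of Theorem 5: under the abstract
discrete Stokes inf-sup condition and L ≥ 1/(λ + c_{K_d}²), with
ρ_d² = 1/(L⁻¹/(β_{sd}⁻² + λ) + 1), the displacement errors satisfy
a(e_u^m, e_u^m) + λ‖D e_u^m‖² ≤ (λ + c_{K_d}²)⁻¹ ρ_d^{2m} ‖Σᵢ e_{p,i}^0‖². -/
theorem fixed_stress_displacement_decay_discrete
    {U Q : Type*}
    [NormedAddCommGroup U] [InnerProductSpace ℝ U] [CompleteSpace U]
    [NormedAddCommGroup Q] [InnerProductSpace ℝ Q] [CompleteSpace Q]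
    (n : ℕ) (hn : 1 ≤ n)
    (V : Fin n → Type*)
    [∀ i, NormedAddCommGroup (V i)] [∀ i, InnerProductSpace ℝ (V i)]
    [∀ i, CompleteSpace (V i)]
    (a : U →ₗ[ℝ] U →ₗ[ℝ] ℝ)
    (hasymm : ∀ u w : U, a u w = a w u) (hapsd : ∀ u : U, 0 ≤ a u u)
    (D : U →L[ℝ] Q) (Dv : ∀ i, V i →L[ℝ] Q)
    (lam L cKd : ℝ) (Rinv : Fin n → ℝ)
    (hlam : 0 < lam) (hL : 0 < L) (hRinv : ∀ i, 0 < Rinv i) (hcKd : 0 < cKd)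
    (M : Matrix (Fin n) (Fin n) ℝ) (hM : M.PosSemidef)
    (hKorn : ∀ w : U, cKd ^ 2 * ‖D w‖ ^ 2 ≤ a w w)
    (eu : ℕ → U) (ev : ℕ → ∀ i, V i) (ep : ℕ → Fin n → Q)
    (heq1 : ∀ (m : ℕ) (q : Fin n → Q),
      -(∑ i, ⟪Dv i (ev (m + 1) i), q i⟫)
          - ∑ i, ∑ j, M i j * ⟪ep (m + 1) j, q i⟫
          - L * ⟪∑ j, ep (m + 1) j, ∑ i, q i⟫
        = -(L * ⟪∑ j, ep m j, ∑ i, q i⟫) + ⟪D (eu m), ∑ i, q i⟫)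
    (heq2 : ∀ (m : ℕ) (z : ∀ i, V i),
      ∑ i, Rinv i * ⟪ev (m + 1) i, z i⟫ - ∑ i, ⟪ep (m + 1) i, Dv i (z i)⟫ = 0)
    (heq3 : ∀ (m : ℕ) (w : U),
      a (eu m) w + lam * ⟪D (eu m), D w⟫ = ⟪∑ i, ep m i, D w⟫)
    (hLge : 1 / (lam + cKd ^ 2) ≤ L)
    (βsd : ℝ) (hβsd : 0 < βsd)
    (hinfsup : ∀ s : Q, ∃ w : U, D w = s ∧ a w w ≤ (βsd ^ 2)⁻¹ * ‖s‖ ^ 2)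
    (ρd2 : ℝ) (hρd2 : ρd2 = 1 / (L⁻¹ / ((βsd ^ 2)⁻¹ + lam) + 1)) :
    ∀ m : ℕ,
      a (eu m) (eu m) + lam * ‖D (eu m)‖ ^ 2
        ≤ (lam + cKd ^ 2)⁻¹ * ρd2 ^ m * ‖∑ i, ep 0 i‖ ^ 2 :=
  fixed_stress_displacement_decay_discrete_general n V a hasymm hapsd D Dv lam L cKd Rinv hlam hL
    hRinv M hM hKorn eu ev ep heq1 heq2 heq3 hLge βsd hinfsup ρd2 hρd2
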